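/- Let A be a string of length n over Σ∪{?} and B a string of length m with n/2 < m ≤ n, and let k be the total number of wildcard entries in A and B. Suppose that for every shift d with 1 ≤ d < k, the shifted matching sum of B with shift d is at least 3k. Then for every pair of indices α ≤ β with 0 ≤ α, β ≤ n−m and β−α < k, there is at most one index i with α ≤ i ≤ β such that the number of mismatches between A[i, i+m−1] and B is smaller than k/2. -/
import Mathlib


/-- Two entries of a string over `Σ ∪ {?}` (wildcard modeled as `none`) match:
they are equal or at least one of them is the wildcard. -/
def wmatch {σ : Type*} (x y : Option σ) : Prop := x = none ∨ y = none ∨ x = y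

instance {σ : Type*} [DecidableEq σ] (x y : Option σ) : Decidable (wmatch x y) := by
  unfold wmatch; infer_instance

/-- Entry `i` of the shifted matching array `S(B,d)`: it is `1` if `B i = ?` or
`B (i+d) = ?` or `B i ≠ B (i+d)`, and `0` otherwise. -/
def S {σ : Type*} [DecidableEq σ] (B : ℕ → Option σ) (d i : ℕ) : ℕ :=
  if B i = none ∨ B (i + d) = none ∨ B i ≠ B (i + d) then 1 else 0

/-- The shifted matching sum of a string of length `m` with shift `d`:
`Σ_{i=0}^{m-d-1} S(B,d)_i`. -/
def Ssum {σ : Type*} [DecidableEq σ] (B : ℕ → Option σ) (m d : ℕ) : ℕ :=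
  ∑ i ∈ Finset.range (m - d), S B d i

/-- Number of mismatches between the window `A[s, s+m-1]` and `B[0, m-1]`. -/
def mismatches {σ : Type*} [DecidableEq σ] (A B : ℕ → Option σ) (s m : ℕ) : ℕ :=
  ((Finset.range m).filter (fun j => ¬ wmatch (A (s + j)) (B j))).card

/-- Number of wildcard entries among the first `len` entries of `X`. -/
def wcount {σ : Type*} [DecidableEq σ] (X : ℕ → Option σ) (len : ℕ) : ℕ :=
  ((Finset.range len).filter (fun i => X i = none)).card


lemma ptwise {σ : Type*} [DecidableEq σ] (a b c : Option σ) :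
    (if b = none ∨ c = none ∨ b ≠ c then 1 else 0) ≤
    (if ¬ wmatch a b then 1 else 0) + ((if ¬ wmatch a c then 1 else 0) +
    ((if a = none then 1 else 0) + ((if b = none then 1 else 0) +
    (if c = none then 1 else 0)))) := by
  unfold wmatch
  split_ifs <;> first | omega | tauto | simp_all

lemma auxFalse {σ : Type*} [DecidableEq σ] (A B : ℕ → Option σ) (n m k : ℕ)
    (hmn : m ≤ n)
    (hk : k = wcount A n + wcount B m)
    (hshift : ∀ d, 1 ≤ d → d < k → 3 * k ≤ Ssum B m d)
    (i j : ℕ) (hij : i < j) (hj : j ≤ n - m) (hd : j - i < k)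
    (hi2 : 2 * mismatches A B i m < k) (hj2 : 2 * mismatches A B j m < k) : False := by
  set d := j - i with hdd
  have hd1 : 1 ≤ d := by omega
  have hji : j = i + d := by omega
  have key : ∀ p, S B d p ≤
      (if ¬ wmatch (A (j + p)) (B p) then 1 else 0) +
      ((if ¬ wmatch (A (i + (d + p))) (B (d + p)) then 1 else 0) +
      ((if A (j + p) = none then 1 else 0) +
      ((if B p = none then 1 else 0) +
      (if B (d + p) = none then 1 else 0)))) := by
    intro p
    unfold S
    rw [show p + d = d + p from Nat.add_comm p d,
        show i + (d + p) = j + p from by omega]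
    exact ptwise _ _ _
  have hsum : Ssum B m d ≤
      (∑ p ∈ Finset.range (m - d), if ¬ wmatch (A (j + p)) (B p) then 1 else 0) +
      ((∑ p ∈ Finset.range (m - d), if ¬ wmatch (A (i + (d + p))) (B (d + p)) then 1 else 0) +
      ((∑ p ∈ Finset.range (m - d), if A (j + p) = none then 1 else 0) +
      ((∑ p ∈ Finset.range (m - d), if B p = none then 1 else 0) +
      (∑ p ∈ Finset.range (m - d), if B (d + p) = none then 1 else 0)))) := by
    unfold Ssum
    rw [← Finset.sum_add_distrib, ← Finset.sum_add_distrib, ← Finset.sum_add_distrib,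
      ← Finset.sum_add_distrib]
    exact Finset.sum_le_sum fun p _ => key p
  have hsub : Finset.range (m - d) ⊆ Finset.range m :=
    Finset.range_subset_range.mpr (by omega)
  have t1 : (∑ p ∈ Finset.range (m - d), if ¬ wmatch (A (j + p)) (B p) then 1 else 0)
      ≤ mismatches A B j m := by
    unfold mismatches
    rw [Finset.card_filter]
    exact Finset.sum_le_sum_of_subset hsub
  have t2 : (∑ p ∈ Finset.range (m - d), if ¬ wmatch (A (i + (d + p))) (B (d + p)) then 1 else 0)
      ≤ mismatches A B i m := by
    unfold mismatches
    rw [Finset.card_filter]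
    have e : (∑ q ∈ Finset.Ico d m, if ¬ wmatch (A (i + q)) (B q) then (1:ℕ) else 0)
        = ∑ p ∈ Finset.range (m - d), if ¬ wmatch (A (i + (d + p))) (B (d + p)) then 1 else 0 := by
      rw [Finset.sum_Ico_eq_sum_range]
    rw [← e]
    refine Finset.sum_le_sum_of_subset ?_
    intro x hx
    simp only [Finset.mem_Ico] at hx
    simp only [Finset.mem_range]
    omega
  have t3 : (∑ p ∈ Finset.range (m - d), if A (j + p) = none then 1 else 0)
      ≤ wcount A n := by
    unfold wcount
    rw [Finset.card_filter]
    have e : (∑ p ∈ Finset.range (m - d), if A (j + p) = none then 1 else 0)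
        = ∑ q ∈ Finset.Ico j (j + (m - d)), if A q = none then (1:ℕ) else 0 := by
      rw [Finset.sum_Ico_eq_sum_range]
      simp
    rw [e]
    refine Finset.sum_le_sum_of_subset ?_
    intro x hx
    simp only [Finset.mem_Ico] at hx
    simp only [Finset.mem_range]
    omega
  have t4 : (∑ p ∈ Finset.range (m - d), if B p = none then 1 else 0)
      ≤ wcount B m := by
    unfold wcount
    rw [Finset.card_filter]
    exact Finset.sum_le_sum_of_subset hsub
  have t5 : (∑ p ∈ Finset.range (m - d), if B (d + p) = none then 1 else 0)
      ≤ wcount B m := by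
    unfold wcount
    rw [Finset.card_filter]
    have e : (∑ q ∈ Finset.Ico d m, if B q = none then (1:ℕ) else 0)
        = ∑ p ∈ Finset.range (m - d), if B (d + p) = none then 1 else 0 := by
      rw [Finset.sum_Ico_eq_sum_range]
    rw [← e]
    refine Finset.sum_le_sum_of_subset ?_
    intro x hx
    simp only [Finset.mem_Ico] at hx
    simp only [Finset.mem_range]
    omega
  have h3k := hshift d hd1 (by omega)
  omega

/-- If every shift `1 ≤ d < k` has shifted matching sum of `B` at least `3k`, then any
interval `[α, β] ⊆ [0, n-m]` of length `< k` contains at most one starting index `i`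
whose window `A[i, i+m-1]` has fewer than `k/2` mismatches with `B`. -/
theorem stmt1 {σ : Type*} [DecidableEq σ] (A B : ℕ → Option σ) (n m k : ℕ)
    (hmn : m ≤ n) (hnm : n < 2 * m)
    (hk : k = wcount A n + wcount B m)
    (hshift : ∀ d, 1 ≤ d → d < k → 3 * k ≤ Ssum B m d) :
    ∀ α β, α ≤ β → β ≤ n - m → β - α < k →
      ∀ i j, α ≤ i → i ≤ β → α ≤ j → j ≤ β →
        2 * mismatches A B i m < k → 2 * mismatches A B j m < k → i = j := by
  intro α β hab hbnm hlen i j hai hib haj hjb hi2 hj2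
  rcases lt_trichotomy i j with h | h | h
  · exact absurd (auxFalse A B n m k hmn hk hshift i j h (le_trans hjb hbnm)
      (by omega) hi2 hj2) not_false
  · exact h
  · exact absurd (auxFalse A B n m k hmn hk hshift j i h (le_trans hib hbnm)
      (by omega) hj2 hi2) not_false
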